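/- For every integer n ≥ 0, e_2p_4(n+96) ≡ e_2p_4(n) (mod 4), where e_2p_4(n) is the sum of e_2(λ) over all partitions λ of n with exactly 4 parts. -/

import Mathlib

/-!
Splitting the partitions of `n + k + 1` into `k + 1` parts according to whether they have a part
equal to `1` (delete it, or subtract `1` from every part) gives
`p(k + 1, n + k + 1) = p(k, n + k) + p(k + 1, n)`, and the same splitting gives a recurrence for
the sums of `e₂` whose coefficients are affine in `n`. Read in `ZMod 4`, the count and the
`e₂`-sum for `k + 1 ≤ 4` parts satisfy `a (n + k + 1) = a n + b n` where `b` is built from the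
sequences for `k` parts and from affine functions, all `96`-periodic. Such an `a` is
`96`-periodic once `a (j + 96) = a j` for `j ≤ k`, which the kernel checks on computable copies
of the sequences.
-/

open Finset

/-- `e_2 p_4(n)`, the sum of the second elementary symmetric polynomial evaluated at
the parts over all partitions of `n` with exactly `4` parts. -/
def e2p4 (n : ℕ) : ℕ :=
  ∑ π ∈ Finset.univ.filter (fun π : Nat.Partition n => Multiset.card π.parts = 4),
    π.parts.esymm 2

open Function

namespace Multiset

variable {R : Type*} [CommSemiring R]

theorem esymm_cons_succ (a : R) (s : Multiset R) (k : ℕ) :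
    (a ::ₘ s).esymm (k + 1) = s.esymm (k + 1) + a * s.esymm k := by
  simp only [esymm, powersetCard_cons, map_add, sum_add, map_map, Function.comp_def, prod_cons,
    sum_map_mul_left]

theorem esymm_one (s : Multiset R) : s.esymm 1 = s.sum := by
  simp [esymm, powersetCard_one]

theorem esymm_two_map_add_one {k : ℕ} {s : Multiset R} (hs : card s = k + 1) :
    (s.map (· + 1)).esymm 2 = s.esymm 2 + k * s.sum + ((k + 1).choose 2 : ℕ) := by
  induction s using Multiset.induction_on generalizing k with
  | empty => simp at hs
  | cons a t ih =>
    rw [card_cons, Nat.add_right_cancel_iff] at hs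
    rcases k with _ | k
    · simp [card_eq_zero.mp hs, esymm]
    have hsum : (t.map (· + 1)).sum = t.sum + (k + 1) := by
      simp [sum_map_add, hs, add_comm]
    rw [map_cons, esymm_cons_succ, esymm_one, hsum, ih hs, esymm_cons_succ, esymm_one, sum_cons,
      Nat.choose_succ_succ' (k + 1), Nat.choose_one_right]
    push_cast
    ring

theorem sum_map_add_one (s : Multiset ℕ) : (s.map (· + 1)).sum = s.sum + card s := by
  simp [sum_map_add]

theorem map_sub_one_map_add_one {s : Multiset ℕ} (hs : ∀ i ∈ s, 0 < i) :
    (s.map (· - 1)).map (· + 1) = s := by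
  rw [map_map]
  exact (map_congr rfl fun i hi => Nat.sub_add_cancel (hs i hi)).trans (map_id' s)

end Multiset

def partitionParts (k n : ℕ) : Finset (Multiset ℕ) :=
  (univ.filter fun π : n.Partition => Multiset.card π.parts = k).image Nat.Partition.parts

theorem mem_partitionParts {k n : ℕ} {s : Multiset ℕ} :
    s ∈ partitionParts k n ↔ Multiset.card s = k ∧ s.sum = n ∧ ∀ i ∈ s, 0 < i := by
  constructor
  · intro h
    obtain ⟨π, hπ, rfl⟩ := mem_image.mp h
    exact ⟨(mem_filter.mp hπ).2, π.parts_sum, fun _ => π.parts_pos⟩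
  · rintro ⟨hcard, hsum, hpos⟩
    exact mem_image.mpr ⟨⟨s, hpos _, hsum⟩, mem_filter.mpr ⟨mem_univ _, hcard⟩, rfl⟩

theorem partitionParts_eq_empty {k n : ℕ} (h : n < k) : partitionParts k n = ∅ := by
  refine eq_empty_of_forall_notMem fun s hs => ?_
  obtain ⟨rfl, rfl, hpos⟩ := mem_partitionParts.mp hs
  have := Multiset.card_nsmul_le_sum (a := 1) fun i hi => hpos i hi
  simp only [smul_eq_mul, mul_one] at this
  omega

theorem partitionParts_one (n : ℕ) : partitionParts 1 (n + 1) = {{n + 1}} := by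
  ext s
  simp only [mem_partitionParts, Multiset.card_eq_one, mem_singleton]
  constructor
  · rintro ⟨⟨a, rfl⟩, hsum, -⟩
    simp_all
  · rintro rfl
    simp

theorem sum_partitionParts_filter_one_mem {M : Type*} [AddCommMonoid M] (f : Multiset ℕ → M)
    (k n : ℕ) :
    ∑ s ∈ partitionParts (k + 1) (n + 1) with 1 ∈ s, f s
      = ∑ s ∈ partitionParts k n, f (1 ::ₘ s) := by
  refine (sum_nbij' (1 ::ₘ ·) (Multiset.erase · 1) ?_ ?_ ?_ ?_ fun _ _ => rfl).symm
  · intro s hs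
    obtain ⟨hcard, hsum, hpos⟩ := mem_partitionParts.mp hs
    simp only [mem_filter, mem_partitionParts, Multiset.card_cons, Multiset.sum_cons,
      Multiset.mem_cons, forall_eq_or_imp]
    exact ⟨⟨by omega, by omega, Nat.one_pos, hpos⟩, by simp⟩
  · intro s hs
    obtain ⟨⟨hcard, hsum, hpos⟩, h1⟩ := (mem_filter.mp hs).imp_left mem_partitionParts.mp
    rw [← Multiset.cons_erase h1] at hcard hsum hpos
    simp only [mem_partitionParts, Multiset.card_cons, Multiset.sum_cons] at hcard hsum ⊢
    exact ⟨by omega, by omega, fun i hi => hpos i (Multiset.mem_cons_of_mem hi)⟩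
  · intro s _
    exact Multiset.erase_cons_head 1 s
  · intro s hs
    exact Multiset.cons_erase (mem_filter.mp hs).2

theorem sum_partitionParts_filter_one_notMem {M : Type*} [AddCommMonoid M]
    (f : Multiset ℕ → M) (k n : ℕ) :
    ∑ s ∈ partitionParts k (n + k) with 1 ∉ s, f s
      = ∑ s ∈ partitionParts k n, f (s.map (· + 1)) := by
  refine (sum_nbij' (Multiset.map (· + 1)) (Multiset.map (· - 1)) ?_ ?_ ?_ ?_
    fun _ _ => rfl).symm
  · intro s hs
    obtain ⟨hcard, hsum, hpos⟩ := mem_partitionParts.mp hs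
    simp only [mem_filter, mem_partitionParts, Multiset.card_map, Multiset.sum_map_add_one,
      Multiset.mem_map]
    refine ⟨⟨hcard, by omega, ?_⟩, ?_⟩
    · rintro _ ⟨a, -, rfl⟩
      exact a.succ_pos
    · rintro ⟨a, ha, h⟩
      exact (hpos a ha).ne' (by omega)
  · intro s hs
    obtain ⟨⟨hcard, hsum, hpos⟩, h1⟩ := (mem_filter.mp hs).imp_left mem_partitionParts.mp
    refine mem_partitionParts.mpr ⟨by simp [hcard], ?_, ?_⟩
    · have := Multiset.sum_map_add_one (s.map (· - 1))
      rw [Multiset.map_sub_one_map_add_one hpos, Multiset.card_map] at this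
      omega
    · rintro _ hx
      obtain ⟨i, hi, rfl⟩ := Multiset.mem_map.mp hx
      have : i ≠ 1 := fun h => h1 (h ▸ hi)
      have := hpos i hi
      omega
  · intro s _
    rw [Multiset.map_map]
    exact (Multiset.map_congr rfl fun i _ => Nat.add_sub_cancel i 1).trans (Multiset.map_id' s)
  · intro s hs
    exact Multiset.map_sub_one_map_add_one (mem_partitionParts.mp (mem_filter.mp hs).1).2.2

theorem sum_partitionParts_succ {M : Type*} [AddCommMonoid M] (f : Multiset ℕ → M) (k n : ℕ) :
    ∑ s ∈ partitionParts (k + 1) (n + k + 1), f s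
      = ∑ s ∈ partitionParts k (n + k), f (1 ::ₘ s)
        + ∑ s ∈ partitionParts (k + 1) n, f (s.map (· + 1)) := by
  rw [← sum_filter_add_sum_filter_not _ (1 ∈ ·), sum_partitionParts_filter_one_mem,
    ← sum_partitionParts_filter_one_notMem]
  rfl

def numPartitions (k n : ℕ) : ℕ := #(partitionParts k n)

def sumEsymmTwo (k n : ℕ) : ℕ := ∑ s ∈ partitionParts k n, s.esymm 2

theorem e2p4_eq_sumEsymmTwo : e2p4 = sumEsymmTwo 4 := by
  funext n
  rw [sumEsymmTwo, partitionParts, sum_image fun _ _ _ _ => Nat.Partition.ext, e2p4]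

theorem numPartitions_of_lt {k n : ℕ} (h : n < k) : numPartitions k n = 0 := by
  rw [numPartitions, partitionParts_eq_empty h, card_empty]

theorem sumEsymmTwo_of_lt {k n : ℕ} (h : n < k) : sumEsymmTwo k n = 0 := by
  rw [sumEsymmTwo, partitionParts_eq_empty h, sum_empty]

theorem numPartitions_one (n : ℕ) : numPartitions 1 (n + 1) = 1 := by
  rw [numPartitions, partitionParts_one, card_singleton]

theorem sumEsymmTwo_one (n : ℕ) : sumEsymmTwo 1 n = 0 := by
  rcases n with _ | n
  · exact sumEsymmTwo_of_lt one_pos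
  · simp [sumEsymmTwo, partitionParts_one, Multiset.esymm]

theorem numPartitions_succ (k n : ℕ) :
    numPartitions (k + 1) (n + k + 1) = numPartitions k (n + k) + numPartitions (k + 1) n := by
  simp only [numPartitions, card_eq_sum_ones]
  exact sum_partitionParts_succ (fun _ => 1) k n

theorem sumEsymmTwo_succ (k n : ℕ) :
    sumEsymmTwo (k + 1) (n + k + 1)
      = sumEsymmTwo k (n + k) + (n + k) * numPartitions k (n + k)
        + sumEsymmTwo (k + 1) n + (k * n + (k + 1).choose 2) * numPartitions (k + 1) n := by
  have hcons : ∀ s ∈ partitionParts k (n + k), (1 ::ₘ s).esymm 2 = s.esymm 2 + (n + k) := by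
    intro s hs
    rw [Multiset.esymm_cons_succ, Multiset.esymm_one, (mem_partitionParts.mp hs).2.1, one_mul]
  have hmap : ∀ s ∈ partitionParts (k + 1) n,
      (s.map (· + 1)).esymm 2 = s.esymm 2 + (k * n + (k + 1).choose 2) := by
    intro s hs
    obtain ⟨hcard, hsum, -⟩ := mem_partitionParts.mp hs
    rw [Multiset.esymm_two_map_add_one hcard, hsum, add_assoc]
    simp only [Nat.cast_id]
  rw [sumEsymmTwo, sum_partitionParts_succ, sum_congr rfl hcons, sum_congr rfl hmap]
  simp only [sum_add_distrib, sum_const, smul_eq_mul, sumEsymmTwo, numPartitions]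
  ring

section StepRecurrence

variable {M : Type*} [Add M] {a b : ℕ → M} {d : ℕ}

theorem periodic_of_add_step {P : ℕ} (hd : 0 < d) (ha : ∀ n, a (n + d) = a n + b n)
    (hb : Periodic b P) (h0 : ∀ j < d, a (j + P) = a j) : Periodic a P := by
  intro n
  induction n using Nat.stepInduction d with
  | base j hj => exact h0 j hj
  | step n ih =>
    have hn := ih 0 hd
    rw [add_zero] at hn
    rw [Nat.add_right_comm, ha, ha, hn, hb]

theorem eq_of_add_step {a' : ℕ → M} (hd : 0 < d) (ha : ∀ n, a (n + d) = a n + b n)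
    (ha' : ∀ n, a' (n + d) = a' n + b n) (h0 : ∀ j < d, a j = a' j) : a = a' := by
  funext n
  induction n using Nat.stepInduction d with
  | base j hj => exact h0 j hj
  | step n ih =>
    have hn := ih 0 hd
    rw [add_zero] at hn
    rw [ha, ha', hn]

end StepRecurrence

theorem ZMod.periodic_natCast_affine {m P : ℕ} (h : m ∣ P) (k c : ℕ) :
    Periodic (fun n : ℕ => ((k * n + c : ℕ) : ZMod m)) P := fun n => by
  push_cast [(ZMod.natCast_eq_zero_iff P m).mpr h]
  ring

/- Structurally recursive copies of `numPartitions k` and `sumEsymmTwo k` for `k = 2, 3, 4`,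
following `numPartitions_succ` and `sumEsymmTwo_succ`: unlike the originals, the kernel can
evaluate them near `n = 96`. -/

def count₂ : ℕ → ℕ
  | 0 => 0 | 1 => 0
  | n + 2 => count₂ n + 1

def count₃ : ℕ → ℕ
  | 0 => 0 | 1 => 0 | 2 => 0
  | n + 3 => count₃ n + count₂ (n + 2)

def count₄ : ℕ → ℕ
  | 0 => 0 | 1 => 0 | 2 => 0 | 3 => 0
  | n + 4 => count₄ n + count₃ (n + 3)

def esymmSum₂ : ℕ → ℕ
  | 0 => 0 | 1 => 0
  | n + 2 => esymmSum₂ n + ((n + 1) + (n + 1) * count₂ n)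

def esymmSum₃ : ℕ → ℕ
  | 0 => 0 | 1 => 0 | 2 => 0
  | n + 3 =>
    esymmSum₃ n + (esymmSum₂ (n + 2) + (n + 2) * count₂ (n + 2) + (2 * n + 3) * count₃ n)

def esymmSum₄ : ℕ → ℕ
  | 0 => 0 | 1 => 0 | 2 => 0 | 3 => 0
  | n + 4 =>
    esymmSum₄ n + (esymmSum₃ (n + 3) + (n + 3) * count₃ (n + 3) + (3 * n + 6) * count₄ n)

theorem numPartitions_two : numPartitions 2 = count₂ :=
  eq_of_add_step (b := fun _ => 1) two_pos
    (fun n => (numPartitions_succ 1 n).trans <| by rw [numPartitions_one, add_comm])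
    (fun _ => rfl) (fun j hj => by rw [numPartitions_of_lt hj]; interval_cases j <;> rfl)

theorem numPartitions_three : numPartitions 3 = count₃ :=
  eq_of_add_step three_pos
    (fun n => (numPartitions_succ 2 n).trans <| by rw [numPartitions_two, add_comm])
    (fun _ => rfl) (fun j hj => by rw [numPartitions_of_lt hj]; interval_cases j <;> rfl)

theorem numPartitions_four : numPartitions 4 = count₄ :=
  eq_of_add_step four_pos
    (fun n => (numPartitions_succ 3 n).trans <| by rw [numPartitions_three, add_comm])
    (fun _ => rfl) (fun j hj => by rw [numPartitions_of_lt hj]; interval_cases j <;> rfl)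

theorem sumEsymmTwo_two : sumEsymmTwo 2 = esymmSum₂ :=
  eq_of_add_step two_pos
    (fun n => (sumEsymmTwo_succ 1 n).trans <| by
      rw [sumEsymmTwo_one, numPartitions_one, numPartitions_two, Nat.choose_self]
      ring)
    (fun _ => rfl) (fun j hj => by rw [sumEsymmTwo_of_lt hj]; interval_cases j <;> rfl)

theorem sumEsymmTwo_three : sumEsymmTwo 3 = esymmSum₃ :=
  eq_of_add_step three_pos
    (fun n => (sumEsymmTwo_succ 2 n).trans <| by
      rw [sumEsymmTwo_two, numPartitions_two, numPartitions_three,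
        show Nat.choose 3 2 = 3 from rfl]
      ring)
    (fun _ => rfl) (fun j hj => by rw [sumEsymmTwo_of_lt hj]; interval_cases j <;> rfl)

theorem sumEsymmTwo_four : sumEsymmTwo 4 = esymmSum₄ :=
  eq_of_add_step four_pos
    (fun n => (sumEsymmTwo_succ 3 n).trans <| by
      rw [sumEsymmTwo_three, numPartitions_three, numPartitions_four,
        show Nat.choose 4 2 = 6 from rfl]
      ring)
    (fun _ => rfl) (fun j hj => by rw [sumEsymmTwo_of_lt hj]; interval_cases j <;> rfl)

local notation "affine" => ZMod.periodic_natCast_affine (show 4 ∣ 96 by norm_num)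

theorem periodic_count₂ : Periodic (fun n => (count₂ n : ZMod 4)) 96 :=
  periodic_of_add_step (b := fun _ => 1) two_pos (fun n => by simp [count₂]) (fun _ => rfl)
    (by decide)

theorem periodic_count₃ : Periodic (fun n => (count₃ n : ZMod 4)) 96 :=
  periodic_of_add_step three_pos (fun n => by simp [count₃]) (periodic_count₂.add_const 2)
    (by decide)

theorem periodic_count₄ : Periodic (fun n => (count₄ n : ZMod 4)) 96 :=
  periodic_of_add_step four_pos (fun n => by simp [count₄]) (periodic_count₃.add_const 3)
    (by decide)

theorem periodic_esymmSum₂ : Periodic (fun n => (esymmSum₂ n : ZMod 4)) 96 :=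
  periodic_of_add_step two_pos (fun n => by simp [esymmSum₂])
    ((affine 1 1).add ((affine 1 1).mul periodic_count₂)) (by decide)

theorem periodic_esymmSum₃ : Periodic (fun n => (esymmSum₃ n : ZMod 4)) 96 :=
  periodic_of_add_step three_pos (fun n => by simp [esymmSum₃])
    (((periodic_esymmSum₂.add_const 2).add ((affine 1 2).mul (periodic_count₂.add_const 2))).add
      ((affine 2 3).mul periodic_count₃)) (by decide)

theorem periodic_esymmSum₄ : Periodic (fun n => (esymmSum₄ n : ZMod 4)) 96 :=
  periodic_of_add_step four_pos (fun n => by simp [esymmSum₄])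
    (((periodic_esymmSum₃.add_const 3).add ((affine 1 3).mul (periodic_count₃.add_const 3))).add
      ((affine 3 6).mul periodic_count₄)) (by decide)

theorem e2p4_period_mod_four (n : ℕ) : e2p4 (n + 96) ≡ e2p4 n [MOD 4] := by
  rw [← ZMod.natCast_eq_natCast_iff, e2p4_eq_sumEsymmTwo, sumEsymmTwo_four]
  exact periodic_esymmSum₄ n
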